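/- Let X be an infinite-dimensional complex Banach space that finitely factors ℓ_q ↪ ℓ_∞ for some 2 ≤ q ≤ ∞, i.e., for each N there exist x₁,…,x_N ∈ X with (1/2)‖λ‖_∞ ≤ ‖∑_{k=1}^N λ_k x_k‖ ≤ ‖λ‖_q for all λ ∈ ℂ^N. Suppose z ∈ ℂ^ℕ is such that for some constant c(z) > 0, every bounded X-valued 1-homogeneous function f(u) = ∑_k y_k u_k on 𝕋^∞ satisfies ∑_k ‖y_k‖·|z_k| ≤ c(z)·sup_{u ∈ 𝕋^∞} ‖∑_k y_k u_k‖. Then z ∈ ℓ_{q'}, where 1/q + 1/q' = 1. -/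

import Mathlib

open MeasureTheory

/-- The point `e^{2πit}` on the unit circle `𝕋 ⊆ ℂ`. -/
noncomputable def torus (t : ℝ) : ℂ := Complex.exp (2 * Real.pi * Complex.I * t)

/-- The `ℓ_q` norm of a finite complex vector, `q ∈ [1,∞]` (via `PiLp`). -/
noncomputable def lqNorm (q : ENNReal) {N : ℕ} (lam : Fin N → ℂ) : ℝ :=
  ‖(WithLp.equiv q (Fin N → ℂ)).symm lam‖

/-!
Test the hypothesis on `y_k = w_k x_k`, where `x_1, …, x_N` realise the factorisation. The lower
`ℓ_∞` estimate gives `‖x_k‖ ≥ 1/2`, and since rotating the coordinates of `w` by points of the torus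
does not change `‖w‖_q`, the upper estimate bounds the supremum by `‖w‖_q`. Hence
`∑ |w_k| |z_k| ≤ 2c ‖w‖_q` for every finite `w`, and the Hölder extremal `w_k = |z_k|^{q'-1}` turns
this into `(∑_{k<N} |z_k|^{q'})^{1/q'} ≤ 2c` for all `N`.
-/

lemma norm_torus (t : ℝ) : ‖torus t‖ = 1 := by
  have h : 2 * Real.pi * Complex.I * (t : ℂ) = ((2 * Real.pi * t : ℝ) : ℂ) * Complex.I := by
    push_cast; ring
  rw [torus, h, Complex.norm_exp_ofReal_mul_I]

section lqNorm

variable {N : ℕ}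

lemma lqNorm_congr_norm (q : ENNReal) {f g : Fin N → ℂ} (h : ∀ i, ‖f i‖ = ‖g i‖) :
    lqNorm q f = lqNorm q g := by
  unfold lqNorm
  rcases ENNReal.trichotomy q with rfl | rfl | hq
  · simp only [PiLp.norm_eq_card, WithLp.equiv_symm_apply, h]
  · simp only [PiLp.norm_eq_ciSup, WithLp.equiv_symm_apply, h]
  · simp only [PiLp.norm_eq_sum hq, WithLp.equiv_symm_apply, h]

lemma lqNorm_top_single (j : Fin N) : lqNorm ⊤ (Pi.single j (1 : ℂ)) = 1 := by
  rw [lqNorm, WithLp.equiv_symm_apply, PiLp.toLp_single, PiLp.norm_single, norm_one]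

/-- For `q = ∞` we have `q.toReal = 0`, hence `q' = 1`: the vector is constantly `1` and the
right side is `S ^ 0 = 1`. -/
lemma lqNorm_ofReal_rpow_le {q : ENNReal} (hq : q ≠ 0) {q' : ℝ} (hq'0 : q' ≠ 0)
    (hq' : 1 / q.toReal + 1 / q' = 1) {a : Fin N → ℝ} (ha : ∀ j, 0 ≤ a j) :
    lqNorm q (fun j => ((a j ^ (q' - 1) : ℝ) : ℂ)) ≤ (∑ j, a j ^ q') ^ (1 / q.toReal) := by
  have hnorm : ∀ j, ‖((a j ^ (q' - 1) : ℝ) : ℂ)‖ = a j ^ (q' - 1) := fun j => by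
    rw [Complex.norm_real, Real.norm_of_nonneg (Real.rpow_nonneg (ha j) _)]
  rcases eq_or_ne q ⊤ with rfl | hqt
  · have hq'1 : q' = 1 := by simpa using hq'
    subst hq'1
    rw [ENNReal.toReal_top, div_zero, Real.rpow_zero, lqNorm, PiLp.norm_eq_ciSup]
    refine Real.iSup_le (fun j => ?_) zero_le_one
    rw [WithLp.equiv_symm_apply, PiLp.toLp_apply, hnorm, sub_self, Real.rpow_zero]
  · have hp : 0 < q.toReal := ENNReal.toReal_pos hq hqt
    have hexp : (q' - 1) * q.toReal = q' := by
      field_simp at hq'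
      linarith
    refine le_of_eq ?_
    rw [lqNorm, PiLp.norm_eq_sum hp]
    congr 1
    refine Finset.sum_congr rfl fun j _ => ?_
    rw [WithLp.equiv_symm_apply, PiLp.toLp_apply, hnorm, ← Real.rpow_mul (ha j), hexp]

end lqNorm

lemma le_rpow_of_le_mul_rpow {p q' S C : ℝ} (hq'pos : 0 < q') (hpq' : 1 / p + 1 / q' = 1)
    (hS : 0 ≤ S) (hC : 0 ≤ C) (h : S ≤ C * S ^ (1 / p)) : S ≤ C ^ q' := by
  rcases hS.eq_or_lt with rfl | hSpos
  · positivity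
  have hsplit : S = S ^ (1 / p) * S ^ (1 / q') := by
    rw [← Real.rpow_add hSpos, hpq', Real.rpow_one]
  have hroot : S ^ (1 / q') ≤ C := by
    refine le_of_mul_le_mul_left ?_ (Real.rpow_pos_of_pos hSpos (1 / p))
    rw [← hsplit, mul_comm]
    exact h
  calc S = (S ^ (1 / q')) ^ q' := by
        rw [← Real.rpow_mul hS, one_div_mul_cancel hq'pos.ne', Real.rpow_one]
    _ ≤ C ^ q' := Real.rpow_le_rpow (by positivity) hroot hq'pos.le

lemma pos_of_one_div_toReal_add_one_div_eq_one {q : ENNReal} (hq : 1 < q) {q' : ℝ}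
    (hq' : 1 / q.toReal + 1 / q' = 1) : 0 < q' := by
  have hlt : 1 / q.toReal < 1 := by
    rcases eq_or_ne q ⊤ with rfl | hqt
    · simp
    · have : 1 < q.toReal := by
        simpa using ENNReal.toReal_strict_mono hqt hq
      exact (div_lt_one (by linarith)).2 this
  exact one_div_pos.1 (by linarith)

/-- Duality `(ℓ_q)^* = ℓ_{q'}`, tested on finitely supported vectors. -/
lemma summable_norm_rpow_of_sum_le_mul_lqNorm {q : ENNReal} (hq : 1 < q) {q' : ℝ}
    (hq' : 1 / q.toReal + 1 / q' = 1) {z : ℕ → ℂ} {C : ℝ} (hC : 0 ≤ C)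
    (h : ∀ (N : ℕ) (w : Fin N → ℂ), ∑ j, ‖w j‖ * ‖z j‖ ≤ C * lqNorm q w) :
    Summable fun k => ‖z k‖ ^ q' := by
  have hq'pos := pos_of_one_div_toReal_add_one_div_eq_one hq hq'
  refine summable_of_sum_range_le (c := C ^ q') (fun _ => by positivity) fun N => ?_
  rw [Finset.sum_range]
  set w : Fin N → ℂ := fun j => ((‖z j‖ ^ (q' - 1) : ℝ) : ℂ)
  have hdual : ∑ j : Fin N, ‖z j‖ ^ q' = ∑ j, ‖w j‖ * ‖z j‖ := by
    refine Finset.sum_congr rfl fun j _ => ?_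
    rw [Complex.norm_real, Real.norm_of_nonneg (by positivity),
      ← Real.rpow_add_one' (norm_nonneg _) (by simpa using hq'pos.ne'), sub_add_cancel]
  refine le_rpow_of_le_mul_rpow hq'pos hq' (by positivity) hC ?_
  calc ∑ j : Fin N, ‖z j‖ ^ q' = ∑ j, ‖w j‖ * ‖z j‖ := hdual
    _ ≤ C * lqNorm q w := h N w
    _ ≤ C * (∑ j : Fin N, ‖z j‖ ^ q') ^ (1 / q.toReal) := by
        gcongr
        exact lqNorm_ofReal_rpow_le (one_pos.trans hq).ne' hq'pos.ne' hq' fun _ => norm_nonneg _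

section Factorisation

variable {X : Type*} [NormedAddCommGroup X] [NormedSpace ℂ X] {N : ℕ} {x : Fin N → X}

lemma half_le_norm_of_half_lqNorm_top_le
    (hx : ∀ lam : Fin N → ℂ, (1/2 : ℝ) * lqNorm ⊤ lam ≤ ‖∑ k, lam k • x k‖) (j : Fin N) :
    1 / 2 ≤ ‖x j‖ := by
  simpa [lqNorm_top_single, Pi.single_apply] using hx (Pi.single j 1)

lemma sum_norm_mul_norm_le_two_mul_lqNorm {q : ENNReal}
    (hx : ∀ lam : Fin N → ℂ,
      (1/2 : ℝ) * lqNorm ⊤ lam ≤ ‖∑ k, lam k • x k‖ ∧ ‖∑ k, lam k • x k‖ ≤ lqNorm q lam)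
    {z : ℕ → ℂ} {c : ℝ} (hc : 0 ≤ c)
    (hz : ∀ (F : Finset ℕ) (y : ℕ → X),
      ∑ k ∈ F, ‖y k‖ * ‖z k‖ ≤ c * ⨆ u : ℕ → ℝ, ‖∑ k ∈ F, torus (u k) • y k‖)
    (w : Fin N → ℂ) :
    ∑ j, ‖w j‖ * ‖z j‖ ≤ 2 * c * lqNorm q w := by
  set y : ℕ → X := fun k => if h : k < N then w ⟨k, h⟩ • x ⟨k, h⟩ else 0
  have hsup : ⨆ u : ℕ → ℝ, ‖∑ k ∈ Finset.range N, torus (u k) • y k‖ ≤ lqNorm q w := by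
    refine ciSup_le fun u => ?_
    calc ‖∑ k ∈ Finset.range N, torus (u k) • y k‖
        = ‖∑ j : Fin N, (torus (u j) * w j) • x j‖ := by
          simp [Finset.sum_range, y, smul_smul]
      _ ≤ lqNorm q fun j => torus (u j) * w j := (hx _).2
      _ = lqNorm q w := lqNorm_congr_norm q fun j => by rw [norm_mul, norm_torus, one_mul]
  calc ∑ j, ‖w j‖ * ‖z j‖ ≤ 2 * ∑ j, ‖w j‖ * ‖x j‖ * ‖z j‖ := by
        rw [Finset.mul_sum]
        refine Finset.sum_le_sum fun j _ => ?_
        have hxj := half_le_norm_of_half_lqNorm_top_le (fun lam => (hx lam).1) j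
        have hwz : 0 ≤ ‖w j‖ * ‖z j‖ := by positivity
        nlinarith
    _ = 2 * ∑ k ∈ Finset.range N, ‖y k‖ * ‖z k‖ := by
        simp [Finset.sum_range, y, norm_smul]
    _ ≤ 2 * (c * lqNorm q w) := by
        gcongr
        exact (hz _ y).trans (mul_le_mul_of_nonneg_left hsup hc)
    _ = 2 * c * lqNorm q w := by ring

end Factorisation

theorem mon_subset_lq'_general (X : Type*) [NormedAddCommGroup X] [NormedSpace ℂ X]
    (q : ENNReal) (hq2 : 2 ≤ q) (q' : ℝ) (hq' : 1 / q.toReal + 1 / q' = 1)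
    (hfact : ∀ N : ℕ, ∃ x : Fin N → X, ∀ lam : Fin N → ℂ,
      (1/2 : ℝ) * lqNorm ⊤ lam ≤ ‖∑ k, lam k • x k‖ ∧ ‖∑ k, lam k • x k‖ ≤ lqNorm q lam)
    (z : ℕ → ℂ) (c : ℝ) (hc : 0 < c)
    (hz : ∀ (F : Finset ℕ) (y : ℕ → X),
      ∑ k ∈ F, ‖y k‖ * ‖z k‖ ≤ c * ⨆ u : ℕ → ℝ, ‖∑ k ∈ F, torus (u k) • y k‖) :
    Summable fun k => ‖z k‖ ^ q' := by
  refine summable_norm_rpow_of_sum_le_mul_lqNorm (ENNReal.one_lt_two.trans_le hq2) hq'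
    (mul_pos two_pos hc).le fun N w => ?_
  obtain ⟨x, hx⟩ := hfact N
  exact sum_norm_mul_norm_le_two_mul_lqNorm hx hc.le hz w

/-- If an infinite-dimensional Banach space `X` finitely factors `ℓ_q ↪ ℓ_∞` (`2 ≤ q ≤ ∞`) and
`z ∈ ℂ^ℕ` is such that every bounded `X`-valued `1`-homogeneous function
`f(u) = ∑_k y_k u_k` on `𝕋^∞` satisfies `∑_k ‖y_k‖|z_k| ≤ c(z)·sup_u ‖∑ y_k u_k‖`,
then `z ∈ ℓ_{q'}`, where `1/q + 1/q' = 1`. -/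
theorem mon_subset_lq' (X : Type*) [NormedAddCommGroup X] [NormedSpace ℂ X] [CompleteSpace X]
    (hinf : ¬ FiniteDimensional ℂ X)
    (q : ENNReal) (hq2 : 2 ≤ q) (q' : ℝ) (hq' : 1 / q.toReal + 1 / q' = 1)
    (hfact : ∀ N : ℕ, ∃ x : Fin N → X, ∀ lam : Fin N → ℂ,
      (1/2 : ℝ) * lqNorm ⊤ lam ≤ ‖∑ k, lam k • x k‖ ∧ ‖∑ k, lam k • x k‖ ≤ lqNorm q lam)
    (z : ℕ → ℂ) (c : ℝ) (hc : 0 < c)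
    (hz : ∀ (F : Finset ℕ) (y : ℕ → X),
      ∑ k ∈ F, ‖y k‖ * ‖z k‖ ≤ c * ⨆ u : ℕ → ℝ, ‖∑ k ∈ F, torus (u k) • y k‖) :
    Summable fun k => ‖z k‖ ^ q' :=
  mon_subset_lq'_general X q hq2 q' hq' hfact z c hc hz
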